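/- arXiv:2203.12134 — 6 statements merged into one kernel-verified Lean document; each statement's English description precedes it below -/
import Mathlib

section
/- Let D be a strongly connected finite directed graph and D̂ → D a connected 2-fold covering of directed graphs. Then D̂ is also strongly connected, i.e., for any two vertices of D̂ there is a directed path from one to the other. -/
/-- A directed (multi-)graph with vertex set `V` and edge set `E`. -/
structure Dgraph (V E : Type) where
  src : E → V
  tgt : E → V

/-- `Walk D u v n` holds if there is a directed edge path of length `n` from `u` to `v`. -/
inductive Walk {V E : Type} (D : Dgraph V E) : V → V → ℕ → Prop
  | nil (v : V) : Walk D v v 0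
  | cons {u w x : V} {n : ℕ} (e : E) (hs : D.src e = u) (ht : D.tgt e = w)
      (tail : Walk D w x n) : Walk D u x (n + 1)

/-- A directed graph is strongly connected if any vertex is joined to any other by a
directed path. -/
def StronglyConnected {V E : Type} (D : Dgraph V E) : Prop :=
  ∀ u v : V, ∃ n : ℕ, Walk D u v n

/-- A directed graph is (undirectedly) connected if any two vertices are joined by a
path of edges traversed in either direction. -/
def UConnected {V E : Type} (D : Dgraph V E) : Prop :=
  ∀ u v : V, Relation.ReflTransGen
    (fun a b => (∃ e, D.src e = a ∧ D.tgt e = b) ∨ (∃ e, D.src e = b ∧ D.tgt e = a)) u v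

/-- A 2-fold covering of directed graphs: a simplicial map that is 2-to-1 on vertices
and on edges and restricts to an isomorphism on the link (outgoing and incoming edges)
of each vertex, i.e. edges lift uniquely at a prescribed endpoint. -/
structure TwoFoldCover {V E V' E' : Type} (D' : Dgraph V' E') (D : Dgraph V E) where
  pV : V' → V
  pE : E' → E
  src_comm : ∀ e, pV (D'.src e) = D.src (pE e)
  tgt_comm : ∀ e, pV (D'.tgt e) = D.tgt (pE e)
  fiberV : ∀ v : V, ∃ a b : V', a ≠ b ∧ ∀ x, pV x = v ↔ (x = a ∨ x = b)
  fiberE : ∀ e : E, ∃ a b : E', a ≠ b ∧ ∀ x, pE x = e ↔ (x = a ∨ x = b)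
  lift_src : ∀ (v' : V') (e : E), D.src e = pV v' → ∃! e', pE e' = e ∧ D'.src e' = v'
  lift_tgt : ∀ (v' : V') (e : E), D.tgt e = pV v' → ∃! e', pE e' = e ∧ D'.tgt e' = v'

/-- Walks can be concatenated. -/
lemma Walk.append {V E : Type} {D : Dgraph V E} {u v w : V} {n m : ℕ}
    (h1 : Walk D u v n) (h2 : Walk D v w m) : Walk D u w (n + m) := by
  induction h1 with
  | nil => simpa using h2
  | cons e hs ht tail ih =>
      rw [Nat.add_right_comm]
      exact Walk.cons e hs ht (ih h2)

/-- Walks in the base lift to walks in the cover, starting at any prescribed lift. -/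
lemma TwoFoldCover.lift_walk {V E V' E' : Type} {D : Dgraph V E} {D' : Dgraph V' E'}
    (c : TwoFoldCover D' D) {u v : V} {n : ℕ} (h : Walk D u v n) :
    ∀ u' : V', c.pV u' = u → ∃ v' : V', c.pV v' = v ∧ Walk D' u' v' n := by
  induction h with
  | nil w => exact fun u' hu' => ⟨u', hu', Walk.nil u'⟩
  | cons e hs ht tail ih =>
      intro u' hu'
      obtain ⟨e', ⟨hpe, hse⟩, _⟩ := c.lift_src u' e (by rw [hu', hs])
      obtain ⟨v', hv', hw⟩ := ih (D'.tgt e') (by rw [c.tgt_comm, hpe, ht])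
      exact ⟨v', hv', Walk.cons e' hse rfl hw⟩

/-- Two lifts of the same edge with the same target coincide. -/
lemma TwoFoldCover.eq_of_tgt_eq {V E V' E' : Type} {D : Dgraph V E} {D' : Dgraph V' E'}
    (c : TwoFoldCover D' D) {e1 e2 : E'} (hp : c.pE e1 = c.pE e2)
    (ht : D'.tgt e1 = D'.tgt e2) : e1 = e2 := by
  obtain ⟨e', _, huniq⟩ := c.lift_tgt (D'.tgt e1) (c.pE e1) (c.tgt_comm e1).symm
  have h1 := huniq e1 ⟨rfl, rfl⟩
  have h2 := huniq e2 ⟨hp.symm, ht.symm⟩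
  rw [h1, h2]

/-- Let `D` be a strongly connected finite directed graph and
`D̂ → D` a connected 2-fold covering of directed graphs.  Then `D̂` is also strongly
connected. -/
theorem strongly_connected_of_two_fold_cover {V E V' E' : Type}
    [Fintype V] [Fintype E] [Fintype V'] [Fintype E']
    (D : Dgraph V E) (D' : Dgraph V' E') (c : TwoFoldCover D' D)
    (hbase : StronglyConnected D) (hconn : UConnected D') :
    StronglyConnected D' := by
  classical
  by_cases hne : Nonempty V'
  swap
  · exact fun u v => (hne ⟨u⟩).elim
  obtain ⟨m0⟩ := hne
  -- reachability relation on the cover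
  set r : V' → V' → Prop := fun x y => ∃ n, Walk D' x y n with hr
  have rrefl : ∀ x, r x x := fun x => ⟨0, Walk.nil x⟩
  have rtrans : ∀ {x y z}, r x y → r y z → r x z := by
    rintro x y z ⟨n, h1⟩ ⟨m, h2⟩
    exact ⟨n + m, h1.append h2⟩
  have rstep : ∀ e' : E', r (D'.src e') (D'.tgt e') :=
    fun e' => ⟨1, Walk.cons e' rfl rfl (Walk.nil _)⟩
  -- find a maximal vertex `m` w.r.t. reachability
  have hsmax : ∃ m : V', ∀ x, ¬(r m x ∧ ¬r x m) := by
    have : IsTrans V' (fun x y => r y x ∧ ¬r x y) :=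
      ⟨fun a b c' ⟨h1, h2⟩ ⟨h3, h4⟩ =>
        ⟨rtrans h3 h1, fun h => h4 (rtrans h1 h)⟩⟩
    have : IsIrrefl V' (fun x y => r y x ∧ ¬r x y) := ⟨fun a ⟨h1, h2⟩ => h2 h1⟩
    obtain ⟨m, -, hm⟩ :=
      (Finite.wellFounded_of_trans_of_irrefl (fun x y : V' => r y x ∧ ¬r x y)).has_min
        Set.univ ⟨m0, trivial⟩
    exact ⟨m, fun x hx => hm x trivial ⟨hx.1, hx.2⟩⟩
  obtain ⟨m, hm⟩ := hsmax
  have hmax : ∀ x, r m x → r x m := by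
    intro x hx
    by_contra h
    exact hm x ⟨hx, h⟩
  -- the set of vertices reachable from m
  set C : Set V' := {x | r m x} with hC
  have hmC : m ∈ C := rrefl m
  have hCout : ∀ e' : E', D'.src e' ∈ C → D'.tgt e' ∈ C :=
    fun e' h => rtrans h (rstep e')
  have hCsc : ∀ x ∈ C, ∀ y ∈ C, r x y := fun x hx y hy => rtrans (hmax x hx) hy
  -- every fiber meets C
  have hAtLeast : ∀ v : V, ∃ x', c.pV x' = v ∧ x' ∈ C := by
    intro v
    obtain ⟨n, hw⟩ := hbase (c.pV m) v
    obtain ⟨x', hx', hwalk⟩ := c.lift_walk hw m rfl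
    exact ⟨x', hx', ⟨n, hwalk⟩⟩
  -- "Both" : both lifts of a base vertex lie in C
  set Both : V → Prop := fun v => ∀ x', c.pV x' = v → x' ∈ C with hBoth
  have hBothStep : ∀ e : E, Both (D.src e) → Both (D.tgt e) := by
    intro e hb
    obtain ⟨a, b, hab, hfv⟩ := c.fiberV (D.src e)
    have hpa : c.pV a = D.src e := (hfv a).mpr (Or.inl rfl)
    have hpb : c.pV b = D.src e := (hfv b).mpr (Or.inr rfl)
    obtain ⟨e1, ⟨hpe1, hse1⟩, -⟩ := c.lift_src a e hpa.symm
    obtain ⟨e2, ⟨hpe2, hse2⟩, -⟩ := c.lift_src b e hpb.symm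
    have he12 : e1 ≠ e2 := by
      intro h; apply hab; rw [← hse1, ← hse2, h]
    have ht12 : D'.tgt e1 ≠ D'.tgt e2 := by
      intro h; exact he12 (c.eq_of_tgt_eq (by rw [hpe1, hpe2]) h)
    have ht1C : D'.tgt e1 ∈ C := hCout e1 (by rw [hse1]; exact hb a hpa)
    have ht2C : D'.tgt e2 ∈ C := hCout e2 (by rw [hse2]; exact hb b hpb)
    intro x' hx'
    obtain ⟨a', b', hab', hfw⟩ := c.fiberV (D.tgt e)
    have h1 : D'.tgt e1 = a' ∨ D'.tgt e1 = b' := (hfw _).mp (by rw [c.tgt_comm, hpe1])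
    have h2 : D'.tgt e2 = a' ∨ D'.tgt e2 = b' := (hfw _).mp (by rw [c.tgt_comm, hpe2])
    have hx : x' = a' ∨ x' = b' := (hfw _).mp hx'
    rcases h1 with h1 | h1 <;> rcases h2 with h2 | h2 <;>
      rcases hx with hx | hx <;>
      first
        | (exact absurd (h1.trans h2.symm) ht12)
        | (rw [hx, ← h1]; exact ht1C)
        | (rw [hx, ← h2]; exact ht2C)
  have hBothWalk : ∀ {u v : V} {n : ℕ}, Walk D u v n → Both u → Both v := by
    intro u v n h
    induction h with
    | nil w => exact id
    | cons e hs ht tail ih =>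
        intro hu
        exact ih (by rw [← ht]; exact hBothStep e (by rwa [hs]))
  by_cases hB : ∃ v, Both v
  · -- both lifts everywhere, so C = V'
    obtain ⟨v0, hv0⟩ := hB
    have hall : ∀ x' : V', x' ∈ C := by
      intro x'
      obtain ⟨n, hw⟩ := hbase v0 (c.pV x')
      exact hBothWalk hw hv0 x' rfl
    exact fun u v => hCsc u (hall u) v (hall v)
  · -- exactly one lift per vertex in C; then C is also closed under in-edges
    push_neg at hB
    have hOne : ∀ v : V, ∃ y, c.pV y = v ∧ y ∉ C := by
      intro v
      have := hB v
      simp only [hBoth, not_forall] at this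
      obtain ⟨y, hy, hyC⟩ := this
      exact ⟨y, hy, hyC⟩
    have hCin : ∀ e' : E', D'.tgt e' ∈ C → D'.src e' ∈ C := by
      intro e' hw'
      obtain ⟨v', hv', hv'C⟩ := hAtLeast (D.src (c.pE e'))
      obtain ⟨e'', ⟨hpe'', hse''⟩, -⟩ := c.lift_src v' (c.pE e') hv'.symm
      have ht''C : D'.tgt e'' ∈ C := hCout e'' (by rwa [hse''])
      -- both D'.tgt e'' and D'.tgt e' lift D.tgt (c.pE e') and lie in C
      obtain ⟨y, hy, hyC⟩ := hOne (D.tgt (c.pE e'))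
      obtain ⟨a', b', hab', hfw⟩ := c.fiberV (D.tgt (c.pE e'))
      have h1 : D'.tgt e'' = a' ∨ D'.tgt e'' = b' := (hfw _).mp (by rw [c.tgt_comm, hpe''])
      have h2 : D'.tgt e' = a' ∨ D'.tgt e' = b' := (hfw _).mp (c.tgt_comm e')
      have hy' : y = a' ∨ y = b' := (hfw _).mp hy
      have heq : D'.tgt e'' = D'.tgt e' := by
        rcases hy' with h | h
        · have hna : a' ∉ C := h ▸ hyC
          rcases h1 with h1 | h1
          · exact absurd (h1 ▸ ht''C) hna
          rcases h2 with h2 | h2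
          · exact absurd (h2 ▸ hw') hna
          rw [h1, h2]
        · have hnb : b' ∉ C := h ▸ hyC
          rcases h1 with h1 | h1
          swap
          · exact absurd (h1 ▸ ht''C) hnb
          rcases h2 with h2 | h2
          swap
          · exact absurd (h2 ▸ hw') hnb
          rw [h1, h2]
      have : e'' = e' := c.eq_of_tgt_eq (by rw [hpe'']) heq
      rw [← this, hse'']
      exact hv'C
    -- C is closed under undirected steps, so C = V' by connectivity
    have hall : ∀ x' : V', x' ∈ C := by
      intro x'
      have h := hconn m x'
      induction h with
      | refl => exact hmC
      | tail h1 h2 ih =>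
          rcases h2 with ⟨e, hs, ht⟩ | ⟨e, hs, ht⟩
          · rw [← ht]; exact hCout e (hs ▸ ih)
          · rw [← hs]; exact hCin e (ht ▸ ih)
    exact fun u v => hCsc u (hall u) v (hall v)
end

section
/- Let A be a primitive nonnegative integer square matrix (some power of A is positive), D(A) its associated directed graph, and D(Â) → D(A) a connected 2-fold directed covering. If the adjacency matrix Â of D(Â) is not primitive, then the gcd of the lengths of directed cycles in D(Â) is exactly 2 and D(Â) is bipartite, with every directed edge going from one part to the other. -/
/-- The edge set of the directed graph `D(A)` associated to a nonnegative integer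
matrix `A`: there are `A i j` directed edges from `j` to `i`. -/
def DE {n : Type} (A : Matrix n n ℕ) : Type := Σ i : n, Σ j : n, Fin (A i j)

/-- The directed graph `D(A)` whose adjacency matrix is `A`. -/
def DofMatrix {n : Type} (A : Matrix n n ℕ) : Dgraph n (DE A) where
  src e := e.2.1
  tgt e := e.1

/-- The adjacency matrix of a finite directed graph: the `(i, j)` entry is the number of
directed edges from `j` to `i`. -/
noncomputable def adjMatrix {V' E' : Type} [Fintype E'] [DecidableEq V']
    (D' : Dgraph V' E') : Matrix V' V' ℕ :=
  Matrix.of fun i j => Fintype.card {e : E' // D'.src e = j ∧ D'.tgt e = i}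

/-- The set of lengths of (nonempty) directed cycles, i.e. closed directed walks. -/
def cycleLengths {V' E' : Type} (D' : Dgraph V' E') : Set ℕ :=
  {n | 0 < n ∧ ∃ v : V', Walk D' v v n}

/-- A nonnegative matrix is primitive if some positive power of it is entrywise
positive. -/
def Primitive {n : Type} [Fintype n] [DecidableEq n] (A : Matrix n n ℕ) : Prop :=
  ∃ k : ℕ, 0 < k ∧ ∀ i j, 0 < (A ^ k) i j

namespace Aux

variable {V E V' E' : Type}

/-- List-based walks. -/
def IsWalk (D : Dgraph V E) : V → V → List E → Prop
  | u, v, [] => u = v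
  | u, v, e :: l => D.src e = u ∧ IsWalk D (D.tgt e) v l

theorem walk_append {D : Dgraph V E} {u v : V} {m : ℕ} (h1 : Walk D u v m) :
    ∀ {w : V} {p : ℕ}, Walk D v w p → Walk D u w (m + p) := by
  induction h1 with
  | nil x => intro w p h2; simpa using h2
  | cons e hs ht tail ih =>
    intro w p h2
    rw [Nat.add_right_comm]
    exact Walk.cons e hs ht (ih h2)

theorem walk_of_isWalk {D : Dgraph V E} (l : List E) :
    ∀ {u v : V}, IsWalk D u v l → Walk D u v l.length := by
  induction l with
  | nil =>
    intro u v h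
    have h' : u = v := h
    subst h'; exact Walk.nil u
  | cons e t ih =>
    intro u v h
    obtain ⟨hs, ht⟩ : D.src e = u ∧ IsWalk D (D.tgt e) v t := h
    exact Walk.cons e hs rfl (ih ht)

theorem isWalk_of_walk {D : Dgraph V E} {u v : V} {m : ℕ} (h : Walk D u v m) :
    ∃ l : List E, IsWalk D u v l ∧ l.length = m := by
  induction h with
  | nil v => exact ⟨[], rfl, rfl⟩
  | cons e hs ht tail ih =>
    obtain ⟨l, hl, hlen⟩ := ih
    refine ⟨e :: l, ⟨hs, by rw [ht]; exact hl⟩, by simp [hlen]⟩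

theorem isWalk_append {D : Dgraph V E} (l1 : List E) :
    ∀ {l2 : List E} {u v w : V}, IsWalk D u v l1 → IsWalk D v w l2 →
      IsWalk D u w (l1 ++ l2) := by
  induction l1 with
  | nil =>
    intro l2 u v w h1 h2
    have h' : u = v := h1
    subst h'; simpa using h2
  | cons e t ih =>
    intro l2 u v w h1 h2
    obtain ⟨hs, ht⟩ : D.src e = u ∧ IsWalk D (D.tgt e) v t := h1
    exact ⟨hs, ih ht h2⟩

/-- The opposite directed graph. -/
def op (D : Dgraph V E) : Dgraph V E := ⟨D.tgt, D.src⟩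

/-- A two-fold cover induces a two-fold cover of opposite graphs. -/
def opCover {D' : Dgraph V' E'} {D : Dgraph V E} (c : TwoFoldCover D' D) :
    TwoFoldCover (op D') (op D) where
  pV := c.pV
  pE := c.pE
  src_comm := c.tgt_comm
  tgt_comm := c.src_comm
  fiberV := c.fiberV
  fiberE := c.fiberE
  lift_src := c.lift_tgt
  lift_tgt := c.lift_src

theorem isWalk_op {D : Dgraph V E} (l : List E) :
    ∀ {u v : V}, IsWalk D u v l → IsWalk (op D) v u l.reverse := by
  induction l with
  | nil =>
    intro u v h
    have h' : u = v := h
    subst h'; exact rfl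
  | cons e t ih =>
    intro u v h
    obtain ⟨hs, ht⟩ : D.src e = u ∧ IsWalk D (D.tgt e) v t := h
    have h1 : IsWalk (op D) v (D.tgt e) t.reverse := ih ht
    have h2 : IsWalk (op D) (D.tgt e) u [e] := ⟨rfl, hs⟩
    simpa using isWalk_append _ h1 h2

section Lift

variable {D : Dgraph V E} {D' : Dgraph V' E'} (c : TwoFoldCover D' D)

theorem lift_walk (L : List E) :
    ∀ {u v : V} (u' : V'), IsWalk D u v L → c.pV u' = u →
      ∃ (M : List E') (v' : V'), IsWalk D' u' v' M ∧ M.map c.pE = L ∧ c.pV v' = v := by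
  induction L with
  | nil =>
    intro u v u' h hu
    have h' : u = v := h
    exact ⟨[], u', rfl, rfl, hu.trans h'⟩
  | cons e L ih =>
    intro u v u' h hu
    obtain ⟨hs, htail⟩ : D.src e = u ∧ IsWalk D (D.tgt e) v L := h
    obtain ⟨e', ⟨hpe, hse⟩, -⟩ := c.lift_src u' e (hs.trans hu.symm)
    have htgt : c.pV (D'.tgt e') = D.tgt e := by rw [c.tgt_comm, hpe]
    obtain ⟨M, v', hM, hmap, hv⟩ := ih (D'.tgt e') htail htgt
    exact ⟨e' :: M, v', ⟨hse, hM⟩, by simp [hmap, hpe], hv⟩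

theorem lift_walk_unique (L : List E) :
    ∀ {u' v1 v2 : V'} {M1 M2 : List E'},
      IsWalk D' u' v1 M1 → IsWalk D' u' v2 M2 → M1.map c.pE = L → M2.map c.pE = L →
      M1 = M2 := by
  induction L with
  | nil =>
    intro u' v1 v2 M1 M2 _ _ h1 h2
    rw [List.map_eq_nil_iff] at h1 h2
    rw [h1, h2]
  | cons e L ih =>
    intro u' v1 v2 M1 M2 hw1 hw2 h1 h2
    obtain ⟨e1, T1, rfl, hpe1, hmap1⟩ := List.map_eq_cons_iff.mp h1
    obtain ⟨e2, T2, rfl, hpe2, hmap2⟩ := List.map_eq_cons_iff.mp h2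
    obtain ⟨hs1, ht1⟩ : D'.src e1 = u' ∧ IsWalk D' (D'.tgt e1) v1 T1 := hw1
    obtain ⟨hs2, ht2⟩ : D'.src e2 = u' ∧ IsWalk D' (D'.tgt e2) v2 T2 := hw2
    have hbase : D.src e = c.pV u' := by rw [← hpe1, ← c.src_comm, hs1]
    obtain ⟨e0, -, huniq⟩ := c.lift_src u' e hbase
    have he1 : e1 = e0 := huniq e1 ⟨hpe1, hs1⟩
    have he2 : e2 = e0 := huniq e2 ⟨hpe2, hs2⟩
    subst he1
    have he12 : e2 = e1 := he2
    subst he12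
    have : T1 = T2 := ih ht1 ht2 hmap1 hmap2
    rw [this]

theorem lift_walk_unique_rev (L : List E) {u1 u2 v' : V'} {M1 M2 : List E'}
    (hw1 : IsWalk D' u1 v' M1) (hw2 : IsWalk D' u2 v' M2)
    (h1 : M1.map c.pE = L) (h2 : M2.map c.pE = L) : M1 = M2 := by
  have r1 := isWalk_op _ hw1
  have r2 := isWalk_op _ hw2
  have := lift_walk_unique (opCover c) L.reverse r1 r2
    (by simp [opCover, h1]) (by simp [opCover, h2])
  exact List.reverse_injective this

/-- A closed walk downstairs lifts to a closed walk upstairs of the same length or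
twice the length. -/
theorem lift_closed {L : List E} {u : V} (hL : IsWalk D u u L)
    {u' : V'} (hu : c.pV u' = u) :
    ∃ M : List E', IsWalk D' u' u' M ∧ (M.map c.pE = L ∨ M.map c.pE = L ++ L) := by
  obtain ⟨M1, x, hM1, hmap1, hx⟩ := lift_walk c L u' hL hu
  by_cases hxx : x = u'
  · subst hxx; exact ⟨M1, hM1, Or.inl hmap1⟩
  · obtain ⟨M2, y, hM2, hmap2, hy⟩ := lift_walk c L x hL hx
    have hyy : y = u' := by
      by_contra hne
      obtain ⟨a, b, hab, hch⟩ := c.fiberV u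
      have hu'm := (hch u').mp hu
      have hxm := (hch x).mp hx
      have hym := (hch y).mp hy
      have hyx : y = x := by
        rcases hu'm with h1 | h1 <;> rcases hxm with h2 | h2 <;> rcases hym with h3 | h3 <;>
          simp_all
      subst hyx
      have hMeq : M1 = M2 := lift_walk_unique_rev c L hM1 hM2 hmap1 hmap2
      subst hMeq
      cases M1 with
      | nil =>
        have h' : u' = y := hM1
        exact hxx h'.symm
      | cons f T =>
        have h1 : D'.src f = u' ∧ IsWalk D' (D'.tgt f) y T := hM1
        have h2 : D'.src f = y ∧ IsWalk D' (D'.tgt f) y T := hM2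
        exact hxx (h2.1.symm.trans h1.1)
    subst hyy
    exact ⟨M1 ++ M2, isWalk_append _ hM1 hM2, Or.inr (by simp [hmap1, hmap2])⟩

/-- Given an edge upstairs and a closed base walk through its projection, the target of
the edge reaches back to its source. -/
theorem reach_back (e' : E') {L0 : List E}
    (hL0 : IsWalk D (D.tgt (c.pE e')) (D.src (c.pE e')) L0) :
    ∃ m : ℕ, Walk D' (D'.tgt e') (D'.src e') m := by
  set e := c.pE e' with he
  have hL : IsWalk D (D.src e) (D.src e) (e :: L0) := ⟨rfl, hL0⟩
  have hu : c.pV (D'.src e') = D.src e := c.src_comm e'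
  obtain ⟨M, hM, hmap⟩ := lift_closed c hL hu
  cases M with
  | nil => rcases hmap with h | h <;> simp at h
  | cons f T =>
    have hpf : c.pE f = e := by
      rcases hmap with h | h <;> simpa using congrArg (fun l => l.head?) h
    obtain ⟨hsf, hT⟩ : D'.src f = D'.src e' ∧ IsWalk D' (D'.tgt f) (D'.src e') T := hM
    obtain ⟨e0, -, huniq⟩ := c.lift_src (D'.src e') e hu.symm
    have hfe : f = e' := by
      rw [huniq f ⟨hpf, hsf⟩, huniq e' ⟨rfl, rfl⟩]
    subst hfe
    exact ⟨T.length, walk_of_isWalk _ hT⟩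

end Lift

theorem walk_of_pow_pos {n : Type} [Fintype n] [DecidableEq n] (A : Matrix n n ℕ) :
    ∀ (m : ℕ) (i j : n), 0 < (A ^ m) i j → Walk (DofMatrix A) j i m := by
  intro m
  induction m with
  | zero =>
    intro i j h
    rw [pow_zero] at h
    have hij : i = j := by
      by_contra hne
      rw [Matrix.one_apply_ne hne] at h
      exact Nat.lt_irrefl 0 h
    subst hij
    exact Walk.nil i
  | succ m ih =>
    intro i j h
    rw [pow_succ, Matrix.mul_apply] at h
    obtain ⟨l, -, hl⟩ := Finset.exists_lt_of_sum_lt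
      (show (∑ _x : n, 0) < ∑ x : n, (A ^ m) i x * A x j by simpa using h)
    have h1 : 0 < (A ^ m) i l := by
      by_contra h0; push_neg at h0; simp [Nat.le_zero.mp h0] at hl
    have h2 : 0 < A l j := by
      by_contra h0; push_neg at h0; simp [Nat.le_zero.mp h0] at hl
    exact Walk.cons (⟨l, j, ⟨0, h2⟩⟩ : DE A) rfl rfl (ih i l h1)

theorem pow_pos_of_walk {V' E' : Type} [Fintype E'] [Fintype V'] [DecidableEq V']
    {D' : Dgraph V' E'} {u v : V'} {m : ℕ} (h : Walk D' u v m) :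
    0 < ((adjMatrix D') ^ m) v u := by
  induction h with
  | nil v => simp [Matrix.one_apply]
  | cons e hs ht tail ih =>
    rename_i a w x nn
    rw [pow_succ, Matrix.mul_apply]
    refine Finset.sum_pos' (fun _ _ => Nat.zero_le _) ⟨w, Finset.mem_univ w, ?_⟩
    refine Nat.mul_pos ih ?_
    show 0 < Fintype.card {e : E' // D'.src e = a ∧ D'.tgt e = w}
    exact Fintype.card_pos_iff.mpr ⟨⟨e, hs, ht⟩⟩

theorem pow_pos_of_le {n : Type} [Fintype n] [DecidableEq n] {A : Matrix n n ℕ} {k : ℕ}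
    (hk : 0 < k) (hpos : ∀ i j, 0 < (A ^ k) i j) :
    ∀ m, k ≤ m → ∀ i j, 0 < (A ^ m) i j := by
  have hrow : ∀ i, ∃ l, 0 < A i l := by
    intro i
    obtain ⟨k', rfl⟩ : ∃ k', k = k' + 1 := ⟨k - 1, by omega⟩
    have h := hpos i i
    rw [pow_succ', Matrix.mul_apply] at h
    obtain ⟨l, -, hl⟩ := Finset.exists_lt_of_sum_lt
      (show (∑ _x : n, 0) < ∑ x : n, A i x * (A ^ k') x i by simpa using h)
    refine ⟨l, ?_⟩
    by_contra h0; push_neg at h0; simp [Nat.le_zero.mp h0] at hl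
  intro m
  induction m with
  | zero => intro hm; omega
  | succ m ih =>
    intro hm i j
    by_cases hkm : k = m + 1
    · subst hkm; exact hpos i j
    · have hm' : k ≤ m := by omega
      rw [pow_succ', Matrix.mul_apply]
      obtain ⟨l, hl⟩ := hrow i
      exact Finset.sum_pos' (fun _ _ => Nat.zero_le _)
        ⟨l, Finset.mem_univ l, Nat.mul_pos hl (ih hm' l j)⟩

theorem rep_coprime {a b : ℕ} (h : Nat.Coprime a b) :
    ∀ N, a * b ≤ N → ∃ x y, N = a * x + b * y := by
  intro N hN
  rcases Nat.lt_or_ge a 2 with ha | ha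
  · interval_cases a
    · have hb1 : b = 1 := by simpa [Nat.coprime_zero_left] using h
      subst hb1
      exact ⟨0, N, by omega⟩
    · exact ⟨N, 0, by simp⟩
  rcases Nat.lt_or_ge b 2 with hb2 | hb2
  · interval_cases b
    · have ha1 : a = 1 := by simpa [Nat.coprime_zero_right] using h
      subst ha1
      exact ⟨N, 0, by omega⟩
    · exact ⟨0, N, by omega⟩
  · have hfrob := frobeniusNumber_pair h ha hb2
    have hab : a + b ≤ a * b := Nat.add_le_mul ha hb2
    have hmem : N ∈ AddSubmonoid.closure ({a, b} : Set ℕ) := by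
      by_contra hnot
      have := hfrob.2 (show N ∈ {k | k ∉ AddSubmonoid.closure ({a, b} : Set ℕ)} from hnot)
      omega
    rw [AddSubmonoid.mem_closure_pair] at hmem
    obtain ⟨x, y, hxy⟩ := hmem
    refine ⟨x, y, ?_⟩
    simp only [smul_eq_mul] at hxy
    rw [← hxy]; ring

end Aux

/-- Let `A` be a primitive nonnegative integer square matrix, `D(A)` its
directed graph, and `D̂ → D(A)` a connected 2-fold directed covering.  If the adjacency
matrix `Â` of `D̂` is not primitive, then the gcd of the lengths of directed cycles in
`D̂` is exactly `2`, and `D̂` is bipartite with every directed edge going from one part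
to the other. -/
theorem gcd_two_and_bipartite_of_nonprimitive_double_cover
    {n V' E' : Type} [Fintype n] [DecidableEq n] [Fintype V'] [DecidableEq V'] [Fintype E']
    (A : Matrix n n ℕ) (hA : Primitive A)
    (D' : Dgraph V' E') (c : TwoFoldCover D' (DofMatrix A)) (hconn : UConnected D')
    (hnotprim : ¬ Primitive (adjMatrix D')) :
    ((∀ m ∈ cycleLengths D', 2 ∣ m) ∧ ∀ d : ℕ, (∀ m ∈ cycleLengths D', d ∣ m) → d ∣ 2) ∧
    ∃ part : V' → Bool, ∀ e : E', part (D'.tgt e) = !part (D'.src e) := by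
  classical
  obtain ⟨k, hkpos, hk⟩ := hA
  have hV' : Nonempty V' := by
    by_contra h
    rw [not_nonempty_iff] at h
    exact hnotprim ⟨1, Nat.one_pos, fun i j => (h.false i).elim⟩
  have hApos : ∀ m, k ≤ m → ∀ i j, 0 < (A ^ m) i j := Aux.pow_pos_of_le hkpos hk
  -- strong connectivity of the cover
  have hS : StronglyConnected D' := by
    have hstep : ∀ a b : V',
        ((∃ e, D'.src e = a ∧ D'.tgt e = b) ∨ (∃ e, D'.src e = b ∧ D'.tgt e = a)) →
        ∃ m, Walk D' a b m := by
      rintro a b (⟨e, hs, ht⟩ | ⟨e, hs, ht⟩)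
      · exact ⟨1, Walk.cons e hs ht (Walk.nil b)⟩
      · have hbase : 0 < (A ^ k) ((DofMatrix A).src (c.pE e)) ((DofMatrix A).tgt (c.pE e)) :=
          hk _ _
        obtain ⟨L0, hL0, -⟩ := Aux.isWalk_of_walk (Aux.walk_of_pow_pos A k _ _ hbase)
        obtain ⟨m, hm⟩ := Aux.reach_back c e hL0
        rw [hs, ht] at hm
        exact ⟨m, hm⟩
    intro u v
    have h := hconn u v
    induction h with
    | refl => exact ⟨0, Walk.nil u⟩
    | tail hab hbc ih =>
      obtain ⟨m1, h1⟩ := ih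
      obtain ⟨m2, h2⟩ := hstep _ _ hbc
      exact ⟨m1 + m2, Aux.walk_append h1 h2⟩
  -- every directed cycle in the cover has even length
  have heven : ∀ m ∈ cycleLengths D', 2 ∣ m := by
    rintro m ⟨hmpos, v, hwalk⟩
    by_contra hodd
    apply hnotprim
    set j := m * k + 1 with hj
    have hjk : k ≤ j := by
      have : 1 * k ≤ m * k := Nat.mul_le_mul_right k hmpos
      omega
    have hbase : 0 < (A ^ j) (c.pV v) (c.pV v) := hApos j hjk _ _
    obtain ⟨L, hL, hLlen⟩ := Aux.isWalk_of_walk (Aux.walk_of_pow_pos A j _ _ hbase)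
    obtain ⟨M, hM, hmap⟩ := Aux.lift_closed c hL rfl
    have hwalkc0 : Walk D' v v M.length := Aux.walk_of_isWalk M hM
    have hc0len : M.length = j ∨ M.length = 2 * j := by
      rcases hmap with h | h
      · left; rw [← hLlen, ← h, List.length_map]
      · right
        have := congrArg List.length h
        simp only [List.length_map, List.length_append, hLlen] at this
        omega
    have hcop : Nat.Coprime M.length m := by
      have hjm : Nat.Coprime j m := by
        simp [hj, Nat.coprime_comm, Nat.coprime_mul_left_add_right]
      rcases hc0len with h | h
      · rw [h]; exact hjm
      · rw [h]; exact Nat.Coprime.mul ((Nat.prime_two.coprime_iff_not_dvd).mpr hodd) hjm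
    have hmul : ∀ (t a : ℕ), Walk D' v v a → Walk D' v v (t * a) := by
      intro t a ha
      induction t with
      | zero => simpa using Walk.nil v
      | succ t ih =>
        have h2 := Aux.walk_append ih ha
        rw [show (t + 1) * a = t * a + a by ring]
        exact h2
    have hbig : ∀ N, M.length * m ≤ N → Walk D' v v N := by
      intro N hN
      obtain ⟨x, y, hxy⟩ := Aux.rep_coprime hcop N hN
      have w1 := hmul x M.length hwalkc0
      have w2 := hmul y m hwalk
      have hsum := Aux.walk_append w1 w2
      rw [hxy, show M.length * x + m * y = x * M.length + y * m by ring]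
      exact hsum
    set P : V' → ℕ := fun u => (hS u v).choose with hPdef
    set Q : V' → ℕ := fun u => (hS v u).choose with hQdef
    have hc0pos : 0 < M.length := by rcases hc0len with h | h <;> omega
    have hKpos : 0 < M.length * m := Nat.mul_pos hc0pos hmpos
    refine ⟨M.length * m + (∑ u, P u) + (∑ u, Q u), by omega, fun i jj => ?_⟩
    have wj : Walk D' jj v (P jj) := (hS jj v).choose_spec
    have wi : Walk D' v i (Q i) := (hS v i).choose_spec
    have hPle : P jj ≤ ∑ u, P u :=
      Finset.single_le_sum (fun _ _ => Nat.zero_le _) (Finset.mem_univ jj)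
    have hQle : Q i ≤ ∑ u, Q u :=
      Finset.single_le_sum (fun _ _ => Nat.zero_le _) (Finset.mem_univ i)
    set K := M.length * m + (∑ u, P u) + (∑ u, Q u) with hK
    have hr : M.length * m ≤ K - P jj - Q i := by omega
    have wr : Walk D' v v (K - P jj - Q i) := hbig _ hr
    have total : Walk D' jj i (P jj + (K - P jj - Q i) + Q i) :=
      Aux.walk_append (Aux.walk_append wj wr) wi
    have hKeq : P jj + (K - P jj - Q i) + Q i = K := by omega
    rw [← hKeq]
    exact Aux.pow_pos_of_walk total
  obtain ⟨v0⟩ := hV'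
  -- closed walks at v0 of length s or 2s for every s ≥ k
  have hcyc : ∀ s : ℕ, k ≤ s → ∃ cl, (cl = s ∨ cl = 2 * s) ∧ Walk D' v0 v0 cl := by
    intro s hs
    have hbase : 0 < (A ^ s) (c.pV v0) (c.pV v0) := hApos s hs _ _
    obtain ⟨L, hL, hLlen⟩ := Aux.isWalk_of_walk (Aux.walk_of_pow_pos A s _ _ hbase)
    obtain ⟨M, hM, hmap⟩ := Aux.lift_closed c hL rfl
    refine ⟨M.length, ?_, Aux.walk_of_isWalk M hM⟩
    rcases hmap with h | h
    · left; rw [← hLlen, ← h, List.length_map]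
    · right
      have := congrArg List.length h
      simp only [List.length_map, List.length_append, hLlen] at this
      omega
  have hgcd : ∀ d : ℕ, (∀ m ∈ cycleLengths D', d ∣ m) → d ∣ 2 := by
    intro d hd
    obtain ⟨c1, hc1, w1⟩ := hcyc k le_rfl
    obtain ⟨c2, hc2, w2⟩ := hcyc (k + 1) (by omega)
    have h1 : d ∣ c1 := hd c1 ⟨by rcases hc1 with h | h <;> omega, v0, w1⟩
    have h2 : d ∣ c2 := hd c2 ⟨by rcases hc2 with h | h <;> omega, v0, w2⟩
    have h1' : d ∣ 2 * k := by
      rcases hc1 with h | h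
      · exact (h ▸ h1).mul_left 2
      · exact h ▸ h1
    have h2' : d ∣ 2 * (k + 1) := by
      rcases hc2 with h | h
      · exact (h ▸ h2).mul_left 2
      · exact h ▸ h2
    have hsub := Nat.dvd_sub h2' h1'
    have h22 : 2 * (k + 1) - 2 * k = 2 := by omega
    rwa [h22] at hsub
  -- bipartition by parity of walk length from v0
  have parity : ∀ (w : V') (n1 n2 : ℕ), Walk D' v0 w n1 → Walk D' v0 w n2 →
      n1 % 2 = n2 % 2 := by
    intro w n1 n2 h1 h2
    obtain ⟨p, hp⟩ := hS w v0
    have c1 := Aux.walk_append h1 hp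
    have c2 := Aux.walk_append h2 hp
    have e1 : n1 + p = 0 ∨ 2 ∣ (n1 + p) := by
      rcases Nat.eq_zero_or_pos (n1 + p) with h | h
      · exact Or.inl h
      · exact Or.inr (heven _ ⟨h, v0, c1⟩)
    have e2 : n2 + p = 0 ∨ 2 ∣ (n2 + p) := by
      rcases Nat.eq_zero_or_pos (n2 + p) with h | h
      · exact Or.inl h
      · exact Or.inr (heven _ ⟨h, v0, c2⟩)
    omega
  refine ⟨⟨heven, hgcd⟩, ⟨fun u => decide ((hS v0 u).choose % 2 = 1), fun e => ?_⟩⟩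
  have hu := (hS v0 (D'.src e)).choose_spec
  have hw2 : Walk D' v0 (D'.tgt e) ((hS v0 (D'.src e)).choose + 1) :=
    Aux.walk_append hu (Walk.cons e rfl rfl (Walk.nil (D'.tgt e)))
  have hpar := parity _ _ _ (hS v0 (D'.tgt e)).choose_spec hw2
  rcases Nat.mod_two_eq_zero_or_one (hS v0 (D'.src e)).choose with h | h
  · have h2 : (hS v0 (D'.tgt e)).choose % 2 = 1 := by omega
    simp [h, h2]
  · have h2 : (hS v0 (D'.tgt e)).choose % 2 = 0 := by omega
    simp [h, h2]
end

section
/- With the setup of the previous statement, suppose additionally f⁺ : T → T is a λ-homothety (λ > 0) fixing x, preserving the leaf system ℒ, and preserving (resp. reversing) the orientations of leaves, and φ : F → F is an endomorphism with f⁺(gx) = φ(g)·f⁺(x) compatible with the action. Then ξ ∘ φ = λ · ξ (resp. ξ ∘ φ = −λ · ξ); that is, ξ is a λ-eigenvector (resp. −λ-eigenvector) of the induced action φ* on Hom(F, ℝ). -/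
/-- In the setting of the signed length `L` of an oriented leaf system
on an ℝ-tree `T` (tripod identity and `F`-equivariance as below), suppose additionally
that `f⁺ : T → T` is a `λ`-homothety (`λ > 0`) fixing `x`, preserving the leaf system and
preserving (`ε = 1`) or reversing (`ε = -1`) the orientations of the leaves — so that
signed lengths transform by `L (f⁺ a) (f⁺ b) = ε·λ·L a b` — and that `φ : F → F` is an
endomorphism compatible with the action in the sense that `f⁺ (g • x) = φ g • f⁺ x`.
Then `ξ ∘ φ = ε·λ·ξ`; that is, `ξ` is a `λ`-eigenvector (resp. `-λ`-eigenvector) of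
`φ*` acting on `Hom(F, ℝ)`. -/
theorem signed_length_cocycle_eigenvector
    {T : Type} [MetricSpace T] {F : Type} [Group F] [MulAction F T]
    (L : T → T → ℝ)
    (tripod : ∀ w y z : T, L w z = L w y + L y z)
    (equivariant : ∀ (g : F) (w z : T), L (g • w) (g • z) = L w z)
    (x : T) (ξ : F → ℝ) (hξ : ∀ g : F, ξ g = L x (g • x))
    (fplus : T → T) (lam : ℝ) (hlam : 0 < lam) (ε : ℝ) (hε : ε = 1 ∨ ε = -1)
    (hhomothety : ∀ a b : T, dist (fplus a) (fplus b) = lam * dist a b)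
    (hfix : fplus x = x)
    (hscale : ∀ a b : T, L (fplus a) (fplus b) = ε * lam * L a b)
    (φ : F → F) (hφ : ∀ g h : F, φ (g * h) = φ g * φ h)
    (hcompat : ∀ g : F, fplus (g • x) = φ g • fplus x) :
    ∀ g : F, ξ (φ g) = ε * lam * ξ g := by
  intro g
  have : L x (φ g • x) = ε * lam * L x (g • x) := by
    calc L x (φ g • x) = L (fplus x) (fplus (g • x)) := by rw [hfix, hcompat, hfix]
    _ = ε * lam * L x (g • x) := hscale _ _
  rw [hξ, hξ, this]
end

section
/- Let H be a finitely generated free abelian group and A : ℤ[H]ⁿ → ℤ[H]^{n+1} a ℤ[H]-linear map (an (n+1)×n matrix), and α : ℤ[H]^{n+1} → ℤ[H] a ℤ[H]-linear map with α ∘ A = 0. For each 1 ≤ i ≤ n+1, let Δᵢ be the determinant of the n×n matrix obtained from A by deleting the i-th row. Then for all i, j, α(eᵢ)·Δⱼ = ± α(eⱼ)·Δᵢ, where {eᵢ} is the standard basis of ℤ[H]^{n+1}. -/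
open Matrix Finset

lemma aux_minors {R : Type*} [CommRing R] {n : ℕ}
    (A : Matrix (Fin (n+1)) (Fin n) R) (a : Fin (n+1) → R)
    (ha : ∀ k, ∑ r, a r * A r k = 0) (i j : Fin (n+1)) :
    a i * (A.submatrix (Fin.succAbove j) id).det
      = (-1)^((i:ℕ)+(j:ℕ)) * (a j * (A.submatrix (Fin.succAbove i) id).det) := by
  classical
  set B : Matrix (Fin (n+1)) (Fin (n+1)) R :=
    Matrix.of fun r c => Fin.lastCases (if r = j then (1:R) else 0) (fun c' => A r c') c with hB
  have hBlast : ∀ r, B r (Fin.last n) = if r = j then (1:R) else 0 := by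
    intro r; simp [hB]
  have hBcast : ∀ r c, B r (Fin.castSucc c) = A r c := by
    intro r c; simp [hB]
  -- a ᵥ* B = Pi.single last (a j)
  have hvB : a ᵥ* B = fun k => if k = Fin.last n then a j else 0 := by
    funext k
    induction k using Fin.lastCases with
    | last =>
        simp only [vecMul, dotProduct, hBlast, mul_ite, mul_one, mul_zero, if_pos rfl]
        simp
    | cast c =>
        simp only [vecMul, dotProduct, hBcast, if_neg (Fin.castSucc_lt_last c).ne]
        exact ha c
  -- key adjugate identity
  have key : a j * adjugate B (Fin.last n) i = a i * B.det := by
    have h1 := congrFun (vecMul_vecMul a B (adjugate B)) i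
    rw [Matrix.mul_adjugate, hvB] at h1
    simp only [vecMul, dotProduct, ite_mul, zero_mul, Finset.sum_ite_eq',
      Finset.mem_univ, if_true, Matrix.smul_apply, Matrix.one_apply, smul_eq_mul,
      mul_ite, mul_one, mul_zero] at h1
    rw [h1]
  -- det B
  have hdet : B.det = (-1)^((j:ℕ)+n) * (A.submatrix (Fin.succAbove j) id).det := by
    rw [Matrix.det_succ_column B (Fin.last n)]
    rw [Finset.sum_eq_single j]
    · rw [hBlast, if_pos rfl, mul_one]
      have hsub : B.submatrix (Fin.succAbove j) ((Fin.last n).succAbove)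
          = A.submatrix (Fin.succAbove j) id := by
        ext r c
        simp [Fin.succAbove_last, hBcast]
      rw [hsub]
      simp
    · intro r _ hr
      simp [hBlast, hr]
    · simp
  -- adjugate entry
  have hadj : adjugate B (Fin.last n) i
      = (-1)^((i:ℕ)+n) * (A.submatrix (Fin.succAbove i) id).det := by
    rw [Matrix.adjugate_apply, Matrix.det_succ_row _ i]
    rw [Finset.sum_eq_single (Fin.last n)]
    · rw [Matrix.updateRow_self]
      simp only [Pi.single_eq_same, mul_one]
      have hsub : (B.updateRow i (Pi.single (Fin.last n) 1)).submatrix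
            (Fin.succAbove i) ((Fin.last n).succAbove)
          = A.submatrix (Fin.succAbove i) id := by
        ext r c
        simp [Fin.succAbove_last, Matrix.updateRow_apply, Fin.succAbove_ne i r, hBcast]
      rw [hsub]
      simp
    · intro c _ hc
      simp [Matrix.updateRow_self, Pi.single_apply, hc]
    · simp
  rw [hdet, hadj] at key
  -- key : a j * ((-1)^(i+n) * Δi) = a i * ((-1)^(j+n) * Δj)
  have hne : ((-1:R))^((j:ℕ)+n) * (-1)^((j:ℕ)+n) = 1 := by
    rw [← pow_add, ← two_mul, pow_mul, neg_one_sq, one_pow]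
  have hst : ((-1:R))^((j:ℕ)+n) * (-1)^((i:ℕ)+n) = (-1)^((i:ℕ)+(j:ℕ)) := by
    rw [← pow_add]
    have h2 : (j:ℕ)+n + ((i:ℕ)+n) = (i:ℕ)+(j:ℕ) + 2*n := by ring
    rw [h2, pow_add, pow_mul, neg_one_sq, one_pow, mul_one]
  calc a i * (A.submatrix (Fin.succAbove j) id).det
      = (-1:R)^((j:ℕ)+n) * (-1)^((j:ℕ)+n)
          * (a i * (A.submatrix (Fin.succAbove j) id).det) := by rw [hne, one_mul]
    _ = (-1)^((j:ℕ)+n) * (a i * ((-1)^((j:ℕ)+n) * (A.submatrix (Fin.succAbove j) id).det)) := by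
        ring
    _ = (-1)^((j:ℕ)+n) * (a j * ((-1)^((i:ℕ)+n) * (A.submatrix (Fin.succAbove i) id).det)) := by
        rw [key]
    _ = ((-1)^((j:ℕ)+n) * (-1)^((i:ℕ)+n)) * (a j * (A.submatrix (Fin.succAbove i) id).det) := by
        ring
    _ = (-1)^((i:ℕ)+(j:ℕ)) * (a j * (A.submatrix (Fin.succAbove i) id).det) := by rw [hst]

/-- Let `H` be a finitely generated free abelian group (written
multiplicatively as `Multiplicative G`), `A : ℤ[H]ⁿ → ℤ[H]^{n+1}` a `ℤ[H]`-linear map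
given by an `(n+1) × n` matrix, and `α : ℤ[H]^{n+1} → ℤ[H]` a `ℤ[H]`-linear map with
`α ∘ A = 0`.  Let `Δ i` be the determinant of the `n × n` matrix obtained from `A` by
deleting the `i`-th row.  Then for all `i, j`,
`α(eᵢ) · Δ j = ± α(eⱼ) · Δ i`, where `{eᵢ}` is the standard basis. -/
theorem minors_relation_of_comp_zero
    {G : Type} [AddCommGroup G] [Module.Free ℤ G] [Module.Finite ℤ G]
    {n : ℕ}
    (A : Matrix (Fin (n + 1)) (Fin n) (MonoidAlgebra ℤ (Multiplicative G)))
    (α : (Fin (n + 1) → MonoidAlgebra ℤ (Multiplicative G)) →ₗ[MonoidAlgebra ℤ (Multiplicative G)]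
      MonoidAlgebra ℤ (Multiplicative G))
    (hαA : ∀ x : Fin n → MonoidAlgebra ℤ (Multiplicative G), α (A.mulVec x) = 0)
    (Δ : Fin (n + 1) → MonoidAlgebra ℤ (Multiplicative G))
    (hΔ : ∀ i, Δ i = (A.submatrix (Fin.succAbove i) id).det) :
    ∀ i j : Fin (n + 1), ∃ ε : MonoidAlgebra ℤ (Multiplicative G),
      (ε = 1 ∨ ε = -1) ∧
      α (Pi.single i 1) * Δ j = ε * (α (Pi.single j 1) * Δ i) := by
  classical
  intro i j
  have ha : ∀ k, ∑ r, α (Pi.single r 1) * A r k = 0 := by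
    intro k
    have h0 := hαA (Pi.single k 1)
    have h1 : A.mulVec (Pi.single k 1)
        = ∑ r, A r k • (Pi.single r 1 : Fin (n+1) → MonoidAlgebra ℤ (Multiplicative G)) := by
      funext r
      simp only [Matrix.mulVec, dotProduct, Pi.single_apply, mul_ite, mul_one, mul_zero,
        Finset.sum_apply, Pi.smul_apply, smul_ite, smul_zero, smul_eq_mul]
      rw [Finset.sum_ite_eq Finset.univ r (fun r' => A r' k)]
      simp
    rw [h1, map_sum] at h0
    simp only [LinearMap.map_smul, smul_eq_mul] at h0
    rw [← h0]
    exact Finset.sum_congr rfl fun r _ => mul_comm _ _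
  refine ⟨(-1)^((i:ℕ)+(j:ℕ)), ?_, ?_⟩
  · rcases Nat.even_or_odd ((i:ℕ)+(j:ℕ)) with h | h
    · exact Or.inl h.neg_one_pow
    · exact Or.inr h.neg_one_pow
  · rw [hΔ, hΔ]
    exact aux_minors A (fun r => α (Pi.single r 1)) ha i j
end

section
/- Let H be a finitely generated free abelian group of rank at least 2 and let g, h ∈ H generate a rank 2 subgroup. Then the elements 1 − g and 1 − h are relatively prime in the group ring ℤ[H] (i.e., their gcd in the UFD ℤ[H] is a unit). -/
/-!
Grade `ℤ[G]` by a functional `φ : G → ℤ`. Since `G` is free, it has unique sums, so the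
highest `φ`-degree of a product of nonzero elements is attained by a single pair of monomials
and equals the sum of the highest degrees of the factors; likewise for the lowest degree. Hence
every divisor of a `φ`-homogeneous element is `φ`-homogeneous. If `φ a = 0` then `1 - g` is
`φ`-homogeneous, so every functional vanishing at `a` is constant on the support of a common
divisor `d` of `1 - g` and `1 - h`, and so is every functional vanishing at `b`. As `a` and `b`
are independent, only `0` is killed by both families of functionals, so `d` is a monomial
`r • x^c`, and `r` divides the constant coefficient `1` of `1 - g`.
-/

namespace Module

variable {R M : Type*} [CommRing R] [AddCommGroup M] [Module R M] [Module.Free R M]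

theorem exists_smul_eq_smul_of_forall_dual_eq_zero {a x : M} (ha : a ≠ 0)
    (hx : ∀ φ : Dual R M, φ a = 0 → φ x = 0) : ∃ r s : R, r ≠ 0 ∧ r • x = s • a := by
  set B := Free.chooseBasis R M
  obtain ⟨j, hj⟩ : ∃ j, B.coord j a ≠ 0 := by
    by_contra! h
    exact ha (B.forall_coord_eq_zero_iff.1 h)
  refine ⟨B.coord j a, B.coord j x, hj, B.ext_elem fun i => ?_⟩
  have := hx (B.coord j a • B.coord i - B.coord i a • B.coord j) <| by
    simp only [LinearMap.sub_apply, LinearMap.smul_apply, smul_eq_mul]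
    ring
  simp only [Basis.coord_apply, LinearMap.sub_apply, LinearMap.smul_apply, smul_eq_mul, map_smul,
    Finsupp.coe_smul, Pi.smul_apply] at this ⊢
  linear_combination this

theorem eq_zero_of_forall_dual_eq_zero [IsDomain R] {a b x : M}
    (hab : LinearIndependent R ![a, b]) (hxa : ∀ φ : Dual R M, φ a = 0 → φ x = 0)
    (hxb : ∀ φ : Dual R M, φ b = 0 → φ x = 0) : x = 0 := by
  obtain ⟨r, s, hr, hrs⟩ := exists_smul_eq_smul_of_forall_dual_eq_zero
    (by simpa using hab.ne_zero 0) hxa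
  obtain ⟨r', s', hr', hrs'⟩ := exists_smul_eq_smul_of_forall_dual_eq_zero
    (by simpa using hab.ne_zero 1) hxb
  have hdep : (r' * s) • a + (-(r * s')) • b = 0 := by
    rw [neg_smul, ← sub_eq_add_neg, mul_smul, mul_smul, ← hrs, ← hrs', smul_comm, sub_self]
  have hs : s = 0 := by
    simpa [hr'] using (LinearIndependent.pair_iff.1 hab _ _ hdep).1
  rwa [hs, zero_smul, smul_eq_zero_iff_right hr] at hrs

theorem Free.uniqueSums (R M : Type*) [Semiring R] [UniqueSums R] [AddCommMonoid M] [Module R M]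
    [Module.Free R M] : UniqueSums M :=
  .of_injective_addHom (Free.chooseBasis R M).repr.toLinearMap.toAddMonoidHom.toAddHom
    (Free.chooseBasis R M).repr.injective inferInstance

end Module

namespace MonoidAlgebra

variable {R A B : Type*} [AddCommMonoid B] [LinearOrder B] [IsOrderedCancelAddMonoid B]

section Grading

variable [Semiring R] [NoZeroDivisors R] [Mul A] [UniqueProds A]
  {v : A → B} (hv : ∀ x y, v (x * y) = v x + v y)
include hv

theorem exists_mem_support_mul_apply_eq_add {f g : R[A]} {a b : A}
    (ha : a ∈ f.coeff.support) (hb : b ∈ g.coeff.support)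
    (hfa : ∀ x ∈ f.coeff.support, v x ≤ v a) (hgb : ∀ y ∈ g.coeff.support, v y ≤ v b) :
    ∃ c ∈ (f * g).coeff.support, v c = v a + v b := by
  classical
  obtain ⟨a₀, ha₀, b₀, hb₀, huniq⟩ := UniqueProds.uniqueMul_of_nonempty
    (A := f.coeff.support.filter (v · = v a)) (B := g.coeff.support.filter (v · = v b))
    ⟨a, Finset.mem_filter.2 ⟨ha, rfl⟩⟩ ⟨b, Finset.mem_filter.2 ⟨hb, rfl⟩⟩
  rw [Finset.mem_filter] at ha₀ hb₀
  -- a product of monomials of `f` and `g` of top degree `v a + v b` only comes from top monomials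
  have huniq' : UniqueMul f.coeff.support g.coeff.support a₀ b₀ := by
    intro x y hx hy hxy
    have hxy' : v x = v a ∧ v y = v b := by
      rw [← add_eq_add_iff_eq_and_eq (hfa x hx) (hgb y hy), ← hv, hxy, hv, ha₀.2, hb₀.2]
    exact huniq (Finset.mem_filter.2 ⟨hx, hxy'.1⟩) (Finset.mem_filter.2 ⟨hy, hxy'.2⟩) hxy
  refine ⟨a₀ * b₀, ?_, by rw [hv, ha₀.2, hb₀.2]⟩
  rw [Finsupp.mem_support_iff, coeff_mul_mul_of_uniqueMul huniq']
  exact mul_ne_zero (Finsupp.mem_support_iff.1 ha₀.1) (Finsupp.mem_support_iff.1 hb₀.1)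

theorem subsingleton_image_support_left_of_mul {d e : R[A]} (hde : d * e ≠ 0)
    (h : (v '' (d * e).coeff.support).Subsingleton) : (v '' d.coeff.support).Subsingleton := by
  have hd : d.coeff.support.Nonempty := by
    simpa [Finsupp.support_nonempty_iff] using left_ne_zero_of_mul hde
  have he : e.coeff.support.Nonempty := by
    simpa [Finsupp.support_nonempty_iff] using right_ne_zero_of_mul hde
  obtain ⟨a, ha, hda⟩ := d.coeff.support.exists_max_image v hd
  obtain ⟨a', ha', hda'⟩ := d.coeff.support.exists_min_image v hd
  obtain ⟨b, hb, heb⟩ := e.coeff.support.exists_max_image v he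
  obtain ⟨b', hb', heb'⟩ := e.coeff.support.exists_min_image v he
  obtain ⟨c, hc, hvc⟩ := exists_mem_support_mul_apply_eq_add hv ha hb hda heb
  -- the same lemma for the reversed order of `B` locates the lowest degree
  obtain ⟨c', hc', hvc'⟩ := exists_mem_support_mul_apply_eq_add (v := OrderDual.toDual ∘ v) hv
    ha' hb' hda' heb'
  have hmin_eq_max : v a' = v a := ((add_eq_add_iff_eq_and_eq (hda a' ha') (heb b' hb')).1 <| by
    rw [← hvc, h ⟨c, hc, rfl⟩ ⟨c', hc', rfl⟩]; exact hvc'.symm).1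
  rintro _ ⟨x, hx, rfl⟩ _ ⟨y, hy, rfl⟩
  rw [le_antisymm (hda x hx) (hmin_eq_max ▸ hda' x hx),
    le_antisymm (hda y hy) (hmin_eq_max ▸ hda' y hy)]

end Grading

theorem isUnit_of_dvd_of_support_subsingleton [CommSemiring R] [Group A]
    {d p : R[A]} (hd : (d.coeff.support : Set A).Subsingleton) (hdp : d ∣ p) {x : A}
    (hpx : IsUnit (p.coeff x)) : IsUnit d := by
  obtain ⟨c, hc⟩ : ∃ c, d.coeff.support ⊆ {c} := by
    rcases hd.eq_empty_or_singleton with h | ⟨c, h⟩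
    · exact ⟨1, by simp_all⟩
    · exact ⟨c, by simp [← Finset.coe_subset, h]⟩
  have hdc : d = single c (d.coeff c) := coeff_injective (Finsupp.support_subset_singleton.1 hc)
  obtain ⟨u, rfl⟩ := hdp
  rw [hdc, coeff_single_mul_apply] at hpx
  rw [hdc]
  exact (Prod.isUnit_iff (x := (_, c)).2 ⟨isUnit_of_mul_isUnit_left hpx, Group.isUnit c⟩).map
    singleHom

section OneSub

variable [Ring R] [Monoid A]

theorem coeff_one_sub_of_one {a : A} (ha : a ≠ 1) : (1 - of R A a).coeff 1 = 1 := by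
  classical
  simp [one_def, of_apply, coeff_single, ha.symm]

theorem support_one_sub_of_subset (a : A) : ((1 - of R A a).coeff.support : Set A) ⊆ {1, a} := by
  classical
  intro x hx
  have := Finsupp.support_sub hx
  rw [one_def, of_apply, Finset.mem_union] at this
  exact this.imp (Finset.mem_singleton.1 <| Finsupp.support_single_subset ·)
    (Finset.mem_singleton.1 <| Finsupp.support_single_subset ·)

theorem subsingleton_image_support_of_dvd_one_sub [NoZeroDivisors R] [Nontrivial R]
    [UniqueProds A] {v : A → B} (hv : ∀ x y, v (x * y) = v x + v y) {a : A} (ha : a ≠ 1)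
    (hva : v a = v 1) {d : R[A]} (hd : d ∣ 1 - of R A a) :
    (v '' d.coeff.support).Subsingleton := by
  obtain ⟨e, he⟩ := hd
  refine subsingleton_image_support_left_of_mul (e := e) hv ?_ ?_ <;> rw [← he]
  · intro h
    have h1 := coeff_one_sub_of_one (R := R) ha
    rw [h] at h1
    simp at h1
  · refine (Set.subsingleton_singleton (a := v 1)).anti ?_
    rintro _ ⟨x, hx, rfl⟩
    rcases support_one_sub_of_subset a hx with rfl | rfl
    exacts [rfl, hva]

end OneSub

end MonoidAlgebra

open MonoidAlgebra in
theorem one_sub_relPrime_of_rank_two_general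
    {G : Type} [AddCommGroup G] [Module.Free ℤ G]
    (a b : G) (hab : LinearIndependent ℤ ![a, b]) :
    IsRelPrime (1 - MonoidAlgebra.of ℤ (Multiplicative G) (Multiplicative.ofAdd a))
      (1 - MonoidAlgebra.of ℤ (Multiplicative G) (Multiplicative.ofAdd b)) := by
  have := Module.Free.uniqueSums ℤ G
  have ha : a ≠ 0 := by simpa using hab.ne_zero 0
  have hb : b ≠ 0 := by simpa using hab.ne_zero 1
  intro d hda hdb
  have hdual {c : G} (hc : c ≠ 0) (hd : d ∣ 1 - of ℤ _ (Multiplicative.ofAdd c))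
      {x y : Multiplicative G} (hx : x ∈ d.coeff.support) (hy : y ∈ d.coeff.support)
      (φ : Module.Dual ℤ G) (hφ : φ c = 0) : φ (x.toAdd - y.toAdd) = 0 := by
    rw [map_sub, sub_eq_zero]
    exact subsingleton_image_support_of_dvd_one_sub (v := fun z => φ z.toAdd)
      (fun _ _ => map_add φ _ _) (by simpa using hc) (by simpa using hφ) hd
      ⟨x, hx, rfl⟩ ⟨y, hy, rfl⟩
  have hsupp : (d.coeff.support : Set (Multiplicative G)).Subsingleton := fun x hx y hy =>
    Multiplicative.toAdd.injective <| sub_eq_zero.1 <|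
      Module.eq_zero_of_forall_dual_eq_zero hab (hdual ha hda hx hy) (hdual hb hdb hx hy)
  refine isUnit_of_dvd_of_support_subsingleton hsupp hda (x := 1) ?_
  rw [coeff_one_sub_of_one (by simpa using ha)]
  exact isUnit_one

/-- Let `H` be a finitely generated free abelian group of rank at
least 2 (written multiplicatively as `Multiplicative G`), and let `g, h ∈ H` generate a
rank 2 subgroup (equivalently, the corresponding elements `a, b` of the additive group
are linearly independent over `ℤ`).  Then `1 - g` and `1 - h` are relatively prime in
the group ring `ℤ[H]`: every common divisor is a unit. -/
theorem one_sub_relPrime_of_rank_two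
    {G : Type} [AddCommGroup G] [Module.Free ℤ G] [Module.Finite ℤ G]
    (hrk : 2 ≤ Module.finrank ℤ G)
    (a b : G) (hab : LinearIndependent ℤ ![a, b]) :
    IsRelPrime (1 - MonoidAlgebra.of ℤ (Multiplicative G) (Multiplicative.ofAdd a))
      (1 - MonoidAlgebra.of ℤ (Multiplicative G) (Multiplicative.ofAdd b)) :=
  one_sub_relPrime_of_rank_two_general a b hab
end

section
/- Let H be a finitely generated free abelian group, ι_u and ι_ζ two ring involutions of ℤ[H] of the form h ↦ (−1)^{u(h)}·h and h ↦ (−1)^{ζ(h)}·h for homomorphisms u, ζ : H → ℤ. Suppose m ∈ ℤ[H] is an element whose support generates H as an abelian group, 1 ∈ supp(m), and ι_u(m) = λ·ι_ζ(m) for some unit λ = ±h₀ of ℤ[H]. If moreover there exists w ∈ Hom(H,ℝ) that is strictly positive on supp(m) \ {1}, then u ≡ ζ mod 2 (i.e., (−1)^{u(h)} = (−1)^{ζ(h)} for all h ∈ H). -/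
/-- The sign `(-1)^z` of an integer `z`. -/
def sgn (z : ℤ) : ℤ := if Even z then 1 else -1

/-- The group ring `ℤ[H]` of a (multiplicatively written) free abelian group. -/
abbrev ZH (G : Type) [AddCommGroup G] := MonoidAlgebra ℤ (Multiplicative G)

/-- The ring involution `ι_u : ℤ[H] → ℤ[H]` extending `h ↦ (-1)^{u(h)}·h`. -/
noncomputable def iotaAt {G : Type} [AddCommGroup G] (u : G →+ ℤ) (P : ZH G) : ZH G :=
  Finsupp.sum P.coeff fun h a =>
    MonoidAlgebra.single h (sgn (u (Multiplicative.toAdd h)) * a)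

/-!
Both involutions preserve supports, so `ι_u(m) = ±h₀·ι_ζ(m)` says that left translation by `h₀`
maps `supp(m)` onto itself. As `1 ∈ supp(m)`, both `h₀` and `h₀⁻¹` lie in `supp(m)`, and `w` cannot
be positive on both, so `h₀ = 1`; comparing the coefficients of `1` then gives `λ = 1`. Hence
`(-1)^{u(h)} = (-1)^{ζ(h)}` on `supp(m)`, and `u ≡ ζ (mod 2)` holds on the subgroup it generates.
-/

open MonoidAlgebra

lemma sgn_zero : sgn 0 = 1 := by simp [sgn]

lemma sgn_ne_zero (z : ℤ) : sgn z ≠ 0 := by unfold sgn; split_ifs <;> simp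

lemma sgn_eq_sgn_iff {a b : ℤ} : sgn a = sgn b ↔ (Even a ↔ Even b) := by
  unfold sgn; split_ifs with ha hb hb <;> simp_all
  exact iff_of_false (by simpa using ha) (by simpa using hb)

lemma intCast_zmod_two_eq_iff {a b : ℤ} : (a : ZMod 2) = b ↔ (Even a ↔ Even b) := by
  rw [← sub_eq_zero, ← Int.cast_sub, ZMod.intCast_eq_zero_iff_even, Int.even_sub]

section Involution

variable {G : Type} [AddCommGroup G]

lemma coeff_iotaAt (u : G →+ ℤ) (P : ZH G) (h : Multiplicative G) :
    (iotaAt u P).coeff h = sgn (u h.toAdd) * P.coeff h := by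
  classical
  rw [iotaAt, coeff_finsuppSum, Finsupp.sum_apply, Finsupp.sum]
  simp only [coeff_single, Finsupp.single_apply]
  rw [Finset.sum_ite_eq']
  split_ifs with hh
  · rfl
  · rw [Finsupp.notMem_support_iff.mp hh, mul_zero]

lemma support_iotaAt (u : G →+ ℤ) (P : ZH G) :
    (iotaAt u P).coeff.support = P.coeff.support := by
  ext h
  simp [Finsupp.mem_support_iff, coeff_iotaAt, sgn_ne_zero]

lemma map_mulLeftEmbedding_support_of_iotaAt_eq {u ζ : G →+ ℤ} {P : ZH G} {s : ℤ}
    {h₀ : Multiplicative G} (hs : s ≠ 0) (heq : iotaAt u P = single h₀ s * iotaAt ζ P) :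
    P.coeff.support.map (mulLeftEmbedding h₀) = P.coeff.support := by
  have := congrArg (fun Q : ZH G => Q.coeff.support) heq
  simp only [support_coeff_single_mul _ s (fun _ => by simp [hs]), support_iotaAt] at this
  exact this.symm

lemma sgn_eq_sgn_of_iotaAt_eq_single_one_mul {u ζ : G →+ ℤ} {P : ZH G} {s : ℤ}
    (hone : (1 : Multiplicative G) ∈ P.coeff.support)
    (heq : iotaAt u P = single 1 s * iotaAt ζ P) :
    ∀ h ∈ P.coeff.support, sgn (u h.toAdd) = sgn (ζ h.toAdd) := by
  have hcoeff (h : Multiplicative G) :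
      sgn (u h.toAdd) * P.coeff h = s * (sgn (ζ h.toAdd) * P.coeff h) := by
    simpa [coeff_iotaAt] using congrArg (fun Q : ZH G => Q.coeff h) heq
  have hs : s = 1 := by
    have h1 := hcoeff 1
    simp only [toAdd_one, map_zero, sgn_zero, one_mul] at h1
    exact (mul_eq_right₀ (Finsupp.mem_support_iff.mp hone)).mp h1.symm
  intro h hh
  have := hcoeff h
  rw [hs, one_mul] at this
  exact mul_right_cancel₀ (Finsupp.mem_support_iff.mp hh) this

end Involution

lemma eq_one_of_map_mulLeftEmbedding_eq {G : Type} [AddCommGroup G] (w : G →+ ℝ)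
    {S : Finset (Multiplicative G)} (hone : 1 ∈ S) (hw : ∀ h ∈ S, h ≠ 1 → 0 < w h.toAdd)
    {g : Multiplicative G} (hg : S.map (mulLeftEmbedding g) = S) : g = 1 := by
  have hg_mem : g ∈ S := by
    rw [← hg]
    simpa using Finset.mem_map_of_mem (mulLeftEmbedding g) hone
  have hginv_mem : g⁻¹ ∈ S := by
    rw [← hg] at hone
    obtain ⟨x, hx, hgx⟩ := Finset.mem_map.mp hone
    rwa [eq_inv_of_mul_eq_one_right hgx] at hx
  by_contra hne
  have hpos := hw g hg_mem hne
  have hneg := hw g⁻¹ hginv_mem (inv_ne_one.mpr hne)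
  rw [toAdd_inv, map_neg] at hneg
  linarith

lemma even_iff_even_of_closure_eq_top {G : Type} [AddCommGroup G] {u ζ : G →+ ℤ}
    {S : Set (Multiplicative G)} (hS : Subgroup.closure S = ⊤)
    (h : ∀ x ∈ S, (Even (u x.toAdd) ↔ Even (ζ x.toAdd))) (g : G) :
    Even (u g) ↔ Even (ζ g) := by
  let parity (v : G →+ ℤ) : Multiplicative G →* Multiplicative (ZMod 2) :=
    AddMonoidHom.toMultiplicative ((Int.castAddHom (ZMod 2)).comp v)
  have hparity : parity u = parity ζ :=
    MonoidHom.eq_of_eqOn_dense hS fun x hx => intCast_zmod_two_eq_iff.mpr (h x hx)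
  exact intCast_zmod_two_eq_iff.mp (DFunLike.congr_fun hparity (Multiplicative.ofAdd g))

theorem involutions_agree_mod_two_general
    {G : Type} [AddCommGroup G]
    (u ζ : G →+ ℤ) (m : ZH G)
    (hgen : Subgroup.closure ((Finsupp.support m.coeff : Finset (Multiplicative G)) : Set (Multiplicative G)) = ⊤)
    (hone : (1 : Multiplicative G) ∈ Finsupp.support m.coeff)
    (hrel : ∃ (s : ℤ) (h₀ : Multiplicative G), (s = 1 ∨ s = -1) ∧
      iotaAt u m = MonoidAlgebra.single h₀ s * iotaAt ζ m)
    (w : G →+ ℝ)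
    (hw : ∀ h ∈ Finsupp.support m.coeff, h ≠ (1 : Multiplicative G) →
      0 < w (Multiplicative.toAdd h)) :
    ∀ g : G, (Even (u g) ↔ Even (ζ g)) := by
  obtain ⟨s, h₀, hs, heq⟩ := hrel
  have hs0 : s ≠ 0 := by rcases hs with rfl | rfl <;> decide
  obtain rfl : h₀ = 1 := eq_one_of_map_mulLeftEmbedding_eq w hone hw
    (map_mulLeftEmbedding_support_of_iotaAt_eq hs0 heq)
  exact even_iff_even_of_closure_eq_top hgen fun h hh =>
    sgn_eq_sgn_iff.mp (sgn_eq_sgn_of_iotaAt_eq_single_one_mul hone heq h hh)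

/-- Let `H` be a finitely generated free abelian group, `ι_u, ι_ζ`
the involutions of `ℤ[H]` attached to homomorphisms `u, ζ : H → ℤ`.  Suppose `m ∈ ℤ[H]`
has support generating `H`, with `1 ∈ supp(m)`, and `ι_u(m) = λ·ι_ζ(m)` for a unit
`λ = ±h₀`.  If moreover some `w ∈ Hom(H, ℝ)` is strictly positive on `supp(m) \ {1}`,
then `u ≡ ζ (mod 2)`. -/
theorem involutions_agree_mod_two
    {G : Type} [AddCommGroup G] [Module.Free ℤ G] [Module.Finite ℤ G]
    (u ζ : G →+ ℤ) (m : ZH G)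
    (hgen : Subgroup.closure ((Finsupp.support m.coeff : Finset (Multiplicative G)) : Set (Multiplicative G)) = ⊤)
    (hone : (1 : Multiplicative G) ∈ Finsupp.support m.coeff)
    (hrel : ∃ (s : ℤ) (h₀ : Multiplicative G), (s = 1 ∨ s = -1) ∧
      iotaAt u m = MonoidAlgebra.single h₀ s * iotaAt ζ m)
    (w : G →+ ℝ)
    (hw : ∀ h ∈ Finsupp.support m.coeff, h ≠ (1 : Multiplicative G) →
      0 < w (Multiplicative.toAdd h)) :
    ∀ g : G, (Even (u g) ↔ Even (ζ g)) :=
  involutions_agree_mod_two_general u ζ m hgen hone hrel w hw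
end
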